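/- arXiv:1908.11576 — 2 statements merged into one kernel-verified Lean document; each statement's English description precedes it below -/
import Mathlib

section
/- Let U and V be closed linear subspaces of a real Hilbert space H, let T = T_{V,U} be the Douglas–Rachford operator, and let K be a closed linear subspace with U ∩ V ⊆ K ⊆ closure(U + V). Then for every x ∈ H, P_{Fix T}(P_K x) = P_{U∩V}(P_K x) = P_{U∩V}(x). -/
/-!
A fixed point `w` of the Douglas–Rachford operator satisfies `P_V (2 P_U w - w) = P_U w`, which
forces `P_U w ∈ U ⊓ V` and `w - P_U w ∈ Uᗮ ⊓ Vᗮ = (U ⊔ V)ᗮ`; conversely `U ⊓ V ⊆ Fix T`. Hence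
`U ⊓ V ≤ Fix T ≤ U ⊓ V ⊔ (U ⊔ V)ᗮ`, and on `closure (U ⊔ V)`, which is orthogonal to the second
summand, the projections onto `Fix T` and onto `U ⊓ V` agree. Since `U ⊓ V ≤ K`, projecting onto
`K` first does not change the projection onto `U ⊓ V`.
-/

section

open Function Submodule

variable {𝕜 E : Type*} [RCLike 𝕜] [NormedAddCommGroup E] [InnerProductSpace 𝕜 E]

namespace Submodule

theorem starProjection_eq_of_le_of_le_sup_orthogonal {S F W : Submodule 𝕜 E}
    [S.HasOrthogonalProjection] [F.HasOrthogonalProjection]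
    (hSF : S ≤ F) (hSW : S ≤ W) (hFS : F ≤ S ⊔ Wᗮ) {y : E} (hy : y ∈ W) :
    F.starProjection y = S.starProjection y := by
  refine eq_starProjection_of_mem_of_inner_eq_zero (hSF (S.starProjection_apply_mem y)) ?_
  have hres : y - S.starProjection y ∈ (S ⊔ Wᗮ)ᗮ := by
    rw [← inf_orthogonal]
    exact ⟨sub_starProjection_mem_orthogonal y,
      le_orthogonal_orthogonal W (W.sub_mem hy (hSW (S.starProjection_apply_mem y)))⟩
  exact fun w hw => inner_left_of_mem_orthogonal (hFS hw) hres

end Submodule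

section DouglasRachford

variable (U V : Submodule 𝕜 E) [U.HasOrthogonalProjection] [V.HasOrthogonalProjection]

noncomputable def douglasRachford (y : E) : E :=
  V.starProjection ((2 : 𝕜) • U.starProjection y - y) + y - U.starProjection y

variable {U V}

theorem isFixedPt_douglasRachford_of_mem_inf {z : E} (hz : z ∈ U ⊓ V) :
    IsFixedPt (douglasRachford U V) z := by
  have h2z : (2 : 𝕜) • z - z = z := by rw [two_smul, add_sub_cancel_right]
  simp only [IsFixedPt, douglasRachford, starProjection_eq_self_iff.mpr hz.1, h2z,
    starProjection_eq_self_iff.mpr hz.2, add_sub_cancel_right]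

theorem starProjection_reflection_eq_of_isFixedPt {w : E}
    (hw : IsFixedPt (douglasRachford U V) w) :
    V.starProjection ((2 : 𝕜) • U.starProjection w - w) = U.starProjection w := by
  have h : V.starProjection ((2 : 𝕜) • U.starProjection w - w) + (w - U.starProjection w) = w := by
    rw [← add_sub_assoc]; exact hw
  rw [eq_sub_of_add_eq h, sub_sub_cancel]

theorem mem_inf_sup_orthogonal_of_isFixedPt {w : E} (hw : IsFixedPt (douglasRachford U V) w) :
    w ∈ U ⊓ V ⊔ (U ⊔ V)ᗮ := by
  have hPV := starProjection_reflection_eq_of_isFixedPt hw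
  set a := U.starProjection w
  have haV : a ∈ V := hPV ▸ V.starProjection_apply_mem _
  have hbV : w - a ∈ Vᗮ := by
    have h := Vᗮ.neg_mem (V.sub_starProjection_mem_orthogonal ((2 : 𝕜) • a - w))
    rwa [hPV, neg_sub, two_smul, add_sub_assoc, sub_add_cancel_left, neg_sub] at h
  have hbUV : w - a ∈ (U ⊔ V)ᗮ := by
    rw [← inf_orthogonal]
    exact ⟨U.sub_starProjection_mem_orthogonal w, hbV⟩
  exact mem_sup.mpr ⟨a, ⟨U.starProjection_apply_mem w, haV⟩, w - a, hbUV, add_sub_cancel a w⟩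

end DouglasRachford

end

theorem stmt6_general {H : Type*} [NormedAddCommGroup H] [InnerProductSpace ℝ H]
    (U V : Submodule ℝ H)
    [Submodule.HasOrthogonalProjection U] [Submodule.HasOrthogonalProjection V]
    [Submodule.HasOrthogonalProjection (U ⊓ V)]
    (T : H → H)
    (hT : ∀ y, T y =
      (Submodule.orthogonalProjectionOnto V ((2 : ℝ) • (Submodule.orthogonalProjectionOnto U y : H) - y) : H)
        + y - (Submodule.orthogonalProjectionOnto U y : H))
    (F : Submodule ℝ H) (hF : ∀ y, y ∈ F ↔ T y = y) [Submodule.HasOrthogonalProjection F]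
    (K : Submodule ℝ H) [Submodule.HasOrthogonalProjection K]
    (hUVK : U ⊓ V ≤ K)
    (hKUV : (K : Set H) ⊆ closure ((U ⊔ V : Submodule ℝ H) : Set H))
    (x : H) :
    (Submodule.orthogonalProjectionOnto F (Submodule.orthogonalProjectionOnto K x : H) : H)
        = (Submodule.orthogonalProjectionOnto (U ⊓ V) (Submodule.orthogonalProjectionOnto K x : H) : H) ∧
    (Submodule.orthogonalProjectionOnto (U ⊓ V) (Submodule.orthogonalProjectionOnto K x : H) : H)
        = (Submodule.orthogonalProjectionOnto (U ⊓ V) x : H) := by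
  obtain rfl : T = douglasRachford U V := funext hT
  refine ⟨Submodule.starProjection_eq_of_le_of_le_sup_orthogonal (W := (U ⊔ V).topologicalClosure)
    (fun z hz => (hF z).2 (isFixedPt_douglasRachford_of_mem_inf hz))
    (inf_le_sup.trans (U ⊔ V).le_topologicalClosure) ?_ ?_,
    congrArg Subtype.val (Submodule.orthogonalProjectionOnto_starProjection_of_le hUVK x)⟩
  · rw [Submodule.orthogonal_closure]
    exact fun w hw => mem_inf_sup_orthogonal_of_isFixedPt ((hF w).1 hw)
  · rw [← SetLike.mem_coe, Submodule.topologicalClosure_coe]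
    exact hKUV (Submodule.coe_mem _)

/-- For closed linear subspaces `U, V`, the Douglas–Rachford operator `T`,
and a closed linear subspace `K` with `U ⊓ V ⊆ K ⊆ closure (U + V)`, one has
`P_{Fix T} (P_K x) = P_{U ⊓ V} (P_K x) = P_{U ⊓ V} x` for all `x`. -/
theorem stmt6 {H : Type*} [NormedAddCommGroup H] [InnerProductSpace ℝ H]
    [CompleteSpace H]
    (U V : Submodule ℝ H)
    (hUc : IsClosed (U : Set H)) (hVc : IsClosed (V : Set H))
    [Submodule.HasOrthogonalProjection U] [Submodule.HasOrthogonalProjection V]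
    [Submodule.HasOrthogonalProjection (U ⊓ V)]
    (T : H → H)
    (hT : ∀ y, T y =
      (Submodule.orthogonalProjectionOnto V ((2 : ℝ) • (Submodule.orthogonalProjectionOnto U y : H) - y) : H)
        + y - (Submodule.orthogonalProjectionOnto U y : H))
    (F : Submodule ℝ H) (hF : ∀ y, y ∈ F ↔ T y = y) [Submodule.HasOrthogonalProjection F]
    (K : Submodule ℝ H) (hKc : IsClosed (K : Set H)) [Submodule.HasOrthogonalProjection K]
    (hUVK : U ⊓ V ≤ K)
    (hKUV : (K : Set H) ⊆ closure ((U ⊔ V : Submodule ℝ H) : Set H))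
    (x : H) :
    (Submodule.orthogonalProjectionOnto F (Submodule.orthogonalProjectionOnto K x : H) : H)
        = (Submodule.orthogonalProjectionOnto (U ⊓ V) (Submodule.orthogonalProjectionOnto K x : H) : H) ∧
    (Submodule.orthogonalProjectionOnto (U ⊓ V) (Submodule.orthogonalProjectionOnto K x : H) : H)
        = (Submodule.orthogonalProjectionOnto (U ⊓ V) x : H) :=
  stmt6_general U V T hT F hF K hUVK hKUV x
end

section
/- Let S = {T₁, …, Tₘ} be isometries on a real Hilbert space H, let W be a nonempty closed affine subspace of ∩ⱼ Fix Tⱼ, and suppose there exist a map F : H → H with F(y) ∈ aff(S(y)) for all y, and γ ∈ [0,1), such that ‖Fx − P_W x‖ ≤ γ‖x − P_W x‖ for all x ∈ H. Then for all x ∈ H and all k ∈ ℕ, ‖CC_S^k x − P_W x‖ ≤ γ^k ‖x − P_W x‖; i.e., the circumcentered isometry method converges linearly to P_W x with rate γ. -/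
/-!
The circumcenter `CC y` is equidistant from the points `T i y`, and so is every point `w` of `W`,
because `w` is fixed by the isometries `T i`. Two points equidistant from a family differ by a
vector orthogonal to the family's affine span, so `CC y` is the nearest point of `aff S(y)` to
every `w ∈ W`. Taking `w = P_W y` gives `‖CC y - P_W y‖ ≤ ‖F y - P_W y‖ ≤ γ ‖y - P_W y‖`.
Pythagoras also shows that `‖w - y‖² - ‖w - CC y‖²` does not depend on `w ∈ W`, which forces
`P_W (CC y) = P_W y`; iterating the one-step estimate gives the rate `γ ^ k`.
-/

open EuclideanGeometry

section Equidistant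

variable {V P ι : Type*} [NormedAddCommGroup V] [InnerProductSpace ℝ V] [MetricSpace P]
  [NormedAddTorsor V P] {v : ι → P} {c q r : P}

theorem vectorSpan_le_orthogonal_of_equidistant {p : P}
    (hp : ∀ i j, dist p (v i) = dist p (v j)) (hq : ∀ i j, dist q (v i) = dist q (v j)) :
    vectorSpan ℝ (Set.range v) ≤ (ℝ ∙ (q -ᵥ p))ᗮ := by
  rw [vectorSpan_def, Submodule.span_le]
  rintro _ ⟨_, ⟨i, rfl⟩, _, ⟨j, rfl⟩, rfl⟩
  rw [SetLike.mem_coe, Submodule.mem_orthogonal_singleton_iff_inner_right]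
  exact inner_vsub_vsub_of_dist_eq_of_dist_eq
    ((dist_comm _ _).trans ((hp j i).trans (dist_comm _ _)))
    ((dist_comm _ _).trans ((hq j i).trans (dist_comm _ _)))

theorem dist_sq_eq_dist_sq_add_dist_sq_of_equidistant (hc : c ∈ affineSpan ℝ (Set.range v))
    (hr : r ∈ affineSpan ℝ (Set.range v)) (hcv : ∀ i j, dist c (v i) = dist c (v j))
    (hqv : ∀ i j, dist q (v i) = dist q (v j)) :
    dist q r ^ 2 = dist q c ^ 2 + dist c r ^ 2 := by
  have hrc : r -ᵥ c ∈ vectorSpan ℝ (Set.range v) := by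
    rw [← direction_affineSpan]
    exact AffineSubspace.vsub_mem_direction hr hc
  have hperp : inner ℝ (q -ᵥ c) (r -ᵥ c) = 0 :=
    Submodule.mem_orthogonal_singleton_iff_inner_right.mp
      (vectorSpan_le_orthogonal_of_equidistant hcv hqv hrc)
  rw [dist_eq_norm_vsub V q r, dist_eq_norm_vsub V q c, dist_comm c, dist_eq_norm_vsub V r c,
    ← vsub_sub_vsub_cancel_right q r c, sq, sq, sq, norm_sub_sq_eq_norm_sq_add_norm_sq_real hperp]

theorem dist_le_of_equidistant (hc : c ∈ affineSpan ℝ (Set.range v))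
    (hr : r ∈ affineSpan ℝ (Set.range v)) (hcv : ∀ i j, dist c (v i) = dist c (v j))
    (hqv : ∀ i j, dist q (v i) = dist q (v j)) : dist q c ≤ dist q r := by
  refine (pow_le_pow_iff_left₀ dist_nonneg dist_nonneg two_ne_zero).mp ?_
  rw [dist_sq_eq_dist_sq_add_dist_sq_of_equidistant hc hr hcv hqv]
  exact le_add_of_nonneg_right (sq_nonneg _)

end Equidistant

theorem orthogonalProjection_eq_of_forall_dist_sq_eq_add {V P : Type*} [NormedAddCommGroup V]
    [InnerProductSpace ℝ V] [MetricSpace P] [NormedAddTorsor V P] {s : AffineSubspace ℝ P}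
    [Nonempty s] [s.direction.HasOrthogonalProjection] {p q : P} (c : ℝ)
    (h : ∀ w ∈ s, dist w p ^ 2 = dist w q ^ 2 + c) :
    orthogonalProjection s p = orthogonalProjection s q := by
  -- Pythagoras at `a = P p` and `b = P q`, combined with `h` at `a` and `b`, gives `2 dist a b² = 0`.
  set a := orthogonalProjection s p
  set b := orthogonalProjection s q
  have hpa := dist_sq_eq_dist_orthogonalProjection_sq_add_dist_orthogonalProjection_sq p b.2
  have hqb := dist_sq_eq_dist_orthogonalProjection_sq_add_dist_orthogonalProjection_sq q a.2
  have ha := h a a.2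
  have hb := h b b.2
  rw [dist_comm (b : P) a, dist_comm p] at hpa
  rw [dist_comm q] at hqb
  simp only [← sq] at hpa hqb
  have hab : dist (a : P) b ^ 2 = 0 := by linarith
  exact Subtype.ext (dist_eq_zero.mp (pow_eq_zero_iff two_ne_zero |>.mp hab))

theorem dist_iterate_le_pow_mul {α : Type*} [PseudoMetricSpace α] {f g : α → α} {γ : ℝ}
    (hγ : 0 ≤ γ) (hg : ∀ y, g (f y) = g y) (hf : ∀ y, dist (f y) (g y) ≤ γ * dist y (g y))
    (x : α) (k : ℕ) : dist (f^[k] x) (g x) ≤ γ ^ k * dist x (g x) := by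
  have hgk : ∀ k, g (f^[k] x) = g x := fun k => by
    induction k with
    | zero => rfl
    | succ k ih => rw [Function.iterate_succ_apply', hg, ih]
  induction k with
  | zero => simp
  | succ k ih =>
    calc dist (f^[k + 1] x) (g x) = dist (f (f^[k] x)) (g (f^[k] x)) := by
          rw [Function.iterate_succ_apply', hgk]
      _ ≤ γ * dist (f^[k] x) (g (f^[k] x)) := hf _
      _ ≤ γ * (γ ^ k * dist x (g x)) := by rw [hgk]; exact mul_le_mul_of_nonneg_left ih hγ
      _ = γ ^ (k + 1) * dist x (g x) := by ring

theorem stmt15_general {H : Type*} [NormedAddCommGroup H] [InnerProductSpace ℝ H]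
    {m : ℕ}
    (T : Fin m → H → H) (hiso : ∀ i, Isometry (T i))
    (CC : H → H)
    (hCC1 : ∀ y, CC y ∈ affineSpan ℝ (Set.range fun i => T i y))
    (hCC2 : ∀ y (i j : Fin m), ‖CC y - T i y‖ = ‖CC y - T j y‖)
    (W : AffineSubspace ℝ H) [Nonempty W] [W.direction.HasOrthogonalProjection]
    (hW : ∀ w ∈ W, ∀ i, T i w = w)
    (γ : ℝ) (hγ0 : 0 ≤ γ)
    (F : H → H) (hFy : ∀ y, F y ∈ affineSpan ℝ (Set.range fun i => T i y))
    (hcontr : ∀ x : H, ‖F x - (EuclideanGeometry.orthogonalProjection W x : H)‖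
      ≤ γ * ‖x - (EuclideanGeometry.orthogonalProjection W x : H)‖) :
    ∀ (x : H) (k : ℕ),
      ‖CC^[k] x - (EuclideanGeometry.orthogonalProjection W x : H)‖
        ≤ γ ^ k * ‖x - (EuclideanGeometry.orthogonalProjection W x : H)‖ := by
  have hCC : ∀ y i j, dist (CC y) (T i y) = dist (CC y) (T j y) := by
    simpa only [dist_eq_norm] using hCC2
  have hfix : ∀ w ∈ W, ∀ y i, dist w (T i y) = dist w y := fun w hw y i => by
    simpa only [hW w hw i] using (hiso i).dist_eq w y
  have hequi : ∀ w ∈ W, ∀ y i j, dist w (T i y) = dist w (T j y) := fun w hw y i j => by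
    rw [hfix w hw, hfix w hw]
  have hproj : ∀ y, (orthogonalProjection W (CC y) : H) = orthogonalProjection W y := by
    intro y
    obtain ⟨_, i, rfl⟩ := (affineSpan_nonempty (k := ℝ)).mp ⟨CC y, hCC1 y⟩
    refine congrArg _ (orthogonalProjection_eq_of_forall_dist_sq_eq_add
      (dist (CC y) (T i y) ^ 2) fun w hw => ?_).symm
    rw [← hfix w hw y i]
    exact dist_sq_eq_dist_sq_add_dist_sq_of_equidistant (hCC1 y) (mem_affineSpan ℝ ⟨i, rfl⟩)
      (hCC y) (hequi w hw y)
  have hstep : ∀ y, dist (CC y) (orthogonalProjection W y) ≤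
      γ * dist y (orthogonalProjection W y) := fun y => by
    rw [dist_comm]
    calc _ ≤ dist (orthogonalProjection W y : H) (F y) :=
          dist_le_of_equidistant (hCC1 y) (hFy y) (hCC y) (hequi _ (orthogonalProjection_mem y) y)
      _ ≤ _ := by simpa only [dist_comm _ (F y), dist_eq_norm] using hcontr y
  simpa only [dist_eq_norm] using dist_iterate_le_pow_mul hγ0 hproj hstep

/-- Linear-rate transfer: if some `F` with `F(y) ∈ aff S(y)` contracts toward
`P_W` with rate `γ ∈ [0,1)`, then the circumcentered isometry method
converges linearly to `P_W x` with rate `γ`. -/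
theorem stmt15 {H : Type*} [NormedAddCommGroup H] [InnerProductSpace ℝ H]
    [CompleteSpace H] {m : ℕ}
    (T : Fin m → H → H) (hiso : ∀ i, Isometry (T i))
    (CC : H → H)
    (hCC1 : ∀ y, CC y ∈ affineSpan ℝ (Set.range fun i => T i y))
    (hCC2 : ∀ y (i j : Fin m), ‖CC y - T i y‖ = ‖CC y - T j y‖)
    (hCC3 : ∀ y p, p ∈ affineSpan ℝ (Set.range fun i => T i y) →
      (∀ i j : Fin m, ‖p - T i y‖ = ‖p - T j y‖) → p = CC y)
    (W : AffineSubspace ℝ H) [Nonempty W] [W.direction.HasOrthogonalProjection]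
    (hW : ∀ w ∈ W, ∀ i, T i w = w)
    (γ : ℝ) (hγ0 : 0 ≤ γ) (hγ1 : γ < 1)
    (F : H → H) (hFy : ∀ y, F y ∈ affineSpan ℝ (Set.range fun i => T i y))
    (hcontr : ∀ x : H, ‖F x - (EuclideanGeometry.orthogonalProjection W x : H)‖
      ≤ γ * ‖x - (EuclideanGeometry.orthogonalProjection W x : H)‖) :
    ∀ (x : H) (k : ℕ),
      ‖CC^[k] x - (EuclideanGeometry.orthogonalProjection W x : H)‖
        ≤ γ ^ k * ‖x - (EuclideanGeometry.orthogonalProjection W x : H)‖ :=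
  stmt15_general T hiso CC hCC1 hCC2 W hW γ hγ0 F hFy hcontr
end
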